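/- Let d_0 be a degree-0 derivation from 𝔏 to 𝔏⊗𝔏 with d_0(L_{kε}) = 0 for all k ∈ ℤ. Then d_0(G_p) = 0 for all p. Similarly d_0(L_p) = d_0(I_p) = d_0(H_p) = 0 for all p, hence d_0 = 0. -/

import Mathlib

open Finsupp

/-- Basis of the generalized super W-algebra 𝔏 (indices range over ℝ;
the actual algebra 𝔏 has indices restricted to Γ resp. s+Γ, see `good`). -/
inductive BasisL : Type
  | L : ℝ → BasisL
  | I : ℝ → BasisL
  | G : ℝ → BasisL
  | H : ℝ → BasisL

noncomputable instance : DecidableEq BasisL := Classical.decEq _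

/-- The ambient free ℂ-module on the basis. -/
abbrev LL : Type := BasisL →₀ ℂ
/-- Model for 𝔏 ⊗ 𝔏 : free module on pairs of basis elements. -/
abbrev VV : Type := (BasisL × BasisL) →₀ ℂ
/-- Model for 𝔏 ⊗ 𝔏 ⊗ 𝔏. -/
abbrev WW : Type := (BasisL × BasisL × BasisL) →₀ ℂ

noncomputable def bL (p : ℝ) : LL := Finsupp.single (BasisL.L p) 1
noncomputable def bI (p : ℝ) : LL := Finsupp.single (BasisL.I p) 1
noncomputable def bG (r : ℝ) : LL := Finsupp.single (BasisL.G r) 1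
noncomputable def bH (r : ℝ) : LL := Finsupp.single (BasisL.H r) 1

/-- Parity (0 = even, 1 = odd). -/
def pN : BasisL → ℕ
  | BasisL.L _ => 0
  | BasisL.I _ => 0
  | BasisL.G _ => 1
  | BasisL.H _ => 1

/-- Z_s-degree of a basis element. -/
def degB : BasisL → ℝ
  | BasisL.L p => p
  | BasisL.I p => p
  | BasisL.G r => r
  | BasisL.H r => r

/-- Membership of a basis element in the actual algebra 𝔏 :
L_p, I_p for p ∈ Γ and G_r, H_r for r ∈ s + Γ. -/
def good (Γ : AddSubgroup ℝ) (s : ℝ) : BasisL → Prop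
  | BasisL.L p => p ∈ Γ
  | BasisL.I p => p ∈ Γ
  | BasisL.G r => r - s ∈ Γ
  | BasisL.H r => r - s ∈ Γ

/-- The super-bracket on basis elements (extended by super skew-symmetry). -/
noncomputable def bb : BasisL → BasisL → LL
  | BasisL.L p, BasisL.L q => ((p - q : ℝ) : ℂ) • bL (p + q)
  | BasisL.L p, BasisL.I q => ((p - q : ℝ) : ℂ) • bI (p + q)
  | BasisL.I p, BasisL.L q => ((p - q : ℝ) : ℂ) • bI (p + q)
  | BasisL.L p, BasisL.G r => ((p / 2 - r : ℝ) : ℂ) • bG (p + r)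
  | BasisL.G r, BasisL.L p => ((-(p / 2 - r) : ℝ) : ℂ) • bG (p + r)
  | BasisL.L p, BasisL.H r => ((p / 2 - r : ℝ) : ℂ) • bH (p + r)
  | BasisL.H r, BasisL.L p => ((-(p / 2 - r) : ℝ) : ℂ) • bH (p + r)
  | BasisL.G r, BasisL.G t => bI (r + t)
  | BasisL.I p, BasisL.G r => ((p - 2 * r : ℝ) : ℂ) • bH (p + r)
  | BasisL.G r, BasisL.I p => ((-(p - 2 * r) : ℝ) : ℂ) • bH (p + r)
  | _, _ => 0

/-- The super-bracket, extended bilinearly. -/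
noncomputable def br (x y : LL) : LL :=
  x.sum fun a ca => y.sum fun b cb => (ca * cb) • bb a b

/-- u ⊗ b for u ∈ 𝔏, b a basis element. -/
noncomputable def tenL (u : LL) (b : BasisL) : VV :=
  u.sum fun a ca => Finsupp.single (a, b) ca

/-- a ⊗ u for a a basis element, u ∈ 𝔏. -/
noncomputable def tenR (a : BasisL) (u : LL) : VV :=
  u.sum fun b cb => Finsupp.single (a, b) cb

/-- Super adjoint diagonal action of a basis element on a ⊗ b :
c ∘ (a ⊗ b) = [c,a] ⊗ b + (−1)^{[c][a]} a ⊗ [c,b]. -/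
noncomputable def actB (c a b : BasisL) : VV :=
  tenL (bb c a) b + ((-1 : ℂ) ^ (pN c * pN a)) • tenR a (bb c b)

/-- Super adjoint diagonal action of x ∈ 𝔏 on u ∈ 𝔏 ⊗ 𝔏. -/
noncomputable def act (x : LL) (u : VV) : VV :=
  x.sum fun c cc => u.sum fun ab cab => (cc * cab) • actB c ab.1 ab.2

/-- The super-twist τ(a ⊗ b) = (−1)^{[a][b]} b ⊗ a. -/
noncomputable def tauV (u : VV) : VV :=
  u.sum fun ab c => (((-1 : ℂ) ^ (pN ab.1 * pN ab.2)) * c) • Finsupp.single (ab.2, ab.1) (1 : ℂ)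

noncomputable def t1 (u : LL) (b c : BasisL) : WW :=
  u.sum fun a ca => Finsupp.single (a, b, c) ca
noncomputable def t2 (a : BasisL) (u : LL) (c : BasisL) : WW :=
  u.sum fun b cb => Finsupp.single (a, b, c) cb
noncomputable def t3 (a b : BasisL) (u : LL) : WW :=
  u.sum fun c cc => Finsupp.single (a, b, c) cc
noncomputable def t23 (a : BasisL) (u : VV) : WW :=
  u.sum fun bc x => Finsupp.single (a, bc.1, bc.2) x

/-- c(r) = [r¹²,r¹³] + [r¹²,r²³] + [r¹³,r²³] ∈ 𝔏⊗𝔏⊗𝔏. -/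
noncomputable def cYB (r : VV) : WW :=
  r.sum fun ab x => r.sum fun ab' y =>
    (x * y) •
      (((-1 : ℂ) ^ (pN ab'.1 * pN ab.2)) • t1 (bb ab.1 ab'.1) ab.2 ab'.2
        + t2 ab.1 (bb ab.2 ab'.1) ab'.2
        + ((-1 : ℂ) ^ (pN ab'.1 * pN ab.2)) • t3 ab.1 ab'.1 (bb ab.2 ab'.2))

/-- Super adjoint diagonal action of a basis element on a ⊗ b ⊗ c. -/
noncomputable def act3B (d a b c : BasisL) : WW :=
  t1 (bb d a) b c + ((-1 : ℂ) ^ (pN d * pN a)) • t2 a (bb d b) c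
    + ((-1 : ℂ) ^ (pN d * (pN a + pN b))) • t3 a b (bb d c)

/-- Super adjoint diagonal action of x ∈ 𝔏 on 𝔏⊗𝔏⊗𝔏. -/
noncomputable def act3 (x : LL) (u : WW) : WW :=
  x.sum fun d cd => u.sum fun abc cu => (cd * cu) • act3B d abc.1 abc.2.1 abc.2.2

/-- The super-cyclic map ξ(a⊗b⊗c) = (−1)^{[a]([b]+[c])} b⊗c⊗a. -/
noncomputable def xiW (u : WW) : WW :=
  u.sum fun abc x =>
    (((-1 : ℂ) ^ (pN abc.1 * (pN abc.2.1 + pN abc.2.2))) * x) •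
      Finsupp.single (abc.2.1, abc.2.2, abc.1) (1 : ℂ)

/-- (1 ⊗ Δ) applied to an element of 𝔏⊗𝔏. -/
noncomputable def oneTensor (D : LL →ₗ[ℂ] VV) (u : VV) : WW :=
  u.sum fun ab c => c • t23 ab.1 (D (Finsupp.single ab.2 1))

/-- x ∈ 𝔏 (support consists of good basis elements). -/
def inL (Γ : AddSubgroup ℝ) (s : ℝ) (x : LL) : Prop :=
  ∀ a ∈ x.support, good Γ s a

/-- u ∈ 𝔏 ⊗ 𝔏. -/
def inV (Γ : AddSubgroup ℝ) (s : ℝ) (u : VV) : Prop :=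
  ∀ ab ∈ u.support, good Γ s ab.1 ∧ good Γ s ab.2

/-- x ∈ 𝔏_p, the homogeneous component of degree p. -/
def inComp (Γ : AddSubgroup ℝ) (s : ℝ) (p : ℝ) (x : LL) : Prop :=
  ∀ a ∈ x.support, good Γ s a ∧ degB a = p

/-- u ∈ 𝔙_r = ⊕_{p+q=r} 𝔏_p ⊗ 𝔏_q. -/
def inCompV (Γ : AddSubgroup ℝ) (s : ℝ) (r : ℝ) (u : VV) : Prop :=
  ∀ ab ∈ u.support, good Γ s ab.1 ∧ good Γ s ab.2 ∧ degB ab.1 + degB ab.2 = r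

/-- x is ℤ₂-homogeneous of parity i. -/
def IsHomogP (x : LL) (i : ℕ) : Prop :=
  ∀ a ∈ x.support, pN a % 2 = i % 2

/-- u ∈ 𝔏⊗𝔏 is ℤ₂-homogeneous of parity i. -/
def IsHomogVP (u : VV) (i : ℕ) : Prop :=
  ∀ ab ∈ u.support, (pN ab.1 + pN ab.2) % 2 = i % 2

/-- d : 𝔏 → 𝔏⊗𝔏 is a homogeneous derivation of parity ι (for the super
adjoint diagonal action):
d([x,y]) = (−1)^{[d][x]} x∘d(y) − (−1)^{[y]([d]+[x])} y∘d(x). -/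
def IsDer (Γ : AddSubgroup ℝ) (s : ℝ) (ι : ℕ) (d : LL →ₗ[ℂ] VV) : Prop :=
  (∀ x, inL Γ s x → inV Γ s (d x)) ∧
  (∀ (i : ℕ) (x : LL), inL Γ s x → IsHomogP x i → IsHomogVP (d x) (i + ι)) ∧
  ∀ (i j : ℕ) (x y : LL), inL Γ s x → inL Γ s y → IsHomogP x i → IsHomogP y j →
    d (br x y)
      = ((-1 : ℂ) ^ (ι * i)) • act x (d y) - ((-1 : ℂ) ^ (j * (ι + i))) • act y (d x)

/-- d has degree t : d(𝔏_p) ⊆ 𝔙_{p+t}. -/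
def HasDeg (Γ : AddSubgroup ℝ) (s : ℝ) (t : ℝ) (d : LL →ₗ[ℂ] VV) : Prop :=
  ∀ (p : ℝ) (x : LL), inComp Γ s p x → inCompV Γ s (p + t) (d x)

/-! For `a ∈ ℤε` the derivation rule turns `[L_a, [L_{-a}, z]] = ν_a(z) z` into
`ν_a(z) d(z) = L_a ∘ L_{-a} ∘ d(z)`, where `ν_a(z)` is a quadratic polynomial in `a`. On the
coefficient of `x ⊗ y`, the operator `L_a ∘ L_{-a}` acts by `ν_a(x) + ν_a(y)` up to terms that
read off `d(z)` at tensors shifted by `±a`, which leave the finite support of `d(z)` for all but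
finitely many `a`. So `(ν_a(z) - ν_a(x) - ν_a(y)) d(z)_{x ⊗ y} = 0` for infinitely many `a`, and
this polynomial in `a` is nonzero: its leading coefficient is a signed sum of the values `-2` and
`-3/4`, which never cancel. -/

open Polynomial

namespace BasisL

def shift (a : ℝ) : BasisL → BasisL
  | L q => L (q + a)
  | I q => I (q + a)
  | G r => G (r + a)
  | H r => H (r + a)

noncomputable def lCoeff (a : ℝ) : BasisL → ℂ
  | L q => ((a - q : ℝ) : ℂ)
  | I q => ((a - q : ℝ) : ℂ)
  | G r => ((a / 2 - r : ℝ) : ℂ)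
  | H r => ((a / 2 - r : ℝ) : ℂ)

noncomputable def quadCoeff : BasisL → ℝ
  | L _ => -2
  | I _ => -2
  | G _ => -(3 / 4)
  | H _ => -(3 / 4)

-- The eigenvalue of `ad L_a ∘ ad L_{-a}` on `z`, as a polynomial in `a`.
noncomputable def eigenPoly (z : BasisL) : ℝ[X] :=
  C (quadCoeff z) * X ^ 2 - C (degB z) * X + C (degB z ^ 2)

@[simp]
lemma shift_shift (a b : ℝ) (z : BasisL) : shift a (shift b z) = shift (b + a) z := by
  cases z <;> simp [shift, add_assoc]

@[simp]
lemma shift_zero (z : BasisL) : shift 0 z = z := by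
  cases z <;> simp [shift]

lemma shift_eq_iff (a : ℝ) (z w : BasisL) : shift a z = w ↔ z = shift (-a) w := by
  constructor <;> rintro rfl <;> simp

lemma degB_shift (a : ℝ) (z : BasisL) : degB (shift a z) = degB z + a := by
  cases z <;> rfl

lemma shift_left_injective (z : BasisL) : Function.Injective (shift · z) := fun a b h => by
  simpa [degB_shift] using congrArg degB h

lemma good_shift {Γ : AddSubgroup ℝ} {s a : ℝ} (ha : a ∈ Γ) {z : BasisL} (hz : good Γ s z) :
    good Γ s (shift a z) := by
  cases z with
  | L q | I q => exact Γ.add_mem hz ha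
  | G r | H r => simpa only [good, shift, add_sub_right_comm] using Γ.add_mem hz ha

lemma bb_L (a : ℝ) (z : BasisL) : bb (L a) z = lCoeff a z • Finsupp.single (shift a z) 1 := by
  cases z <;> simp [bb, lCoeff, shift, bL, bI, bG, bH, add_comm]

lemma lCoeff_shift_neg_mul_lCoeff (a : ℝ) (z : BasisL) :
    lCoeff a (shift (-a) z) * lCoeff (-a) z = (((eigenPoly z).eval a : ℝ) : ℂ) := by
  cases z <;> simp only [lCoeff, shift, eigenPoly, quadCoeff, degB, eval_add, eval_sub, eval_mul,
    eval_C, eval_X, eval_pow] <;> push_cast <;> ring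

lemma coeff_eigenPoly_two (z : BasisL) : (eigenPoly z).coeff 2 = quadCoeff z := by
  rw [eigenPoly, coeff_add, coeff_sub, coeff_C_mul, coeff_C_mul, coeff_X_pow, coeff_X, coeff_C]
  norm_num

lemma eigenPoly_sub_sub_ne_zero (z x y : BasisL) :
    eigenPoly z - eigenPoly x - eigenPoly y ≠ 0 := by
  intro h
  have h2 := congrArg (coeff · 2) h
  simp only [coeff_sub, coeff_eigenPoly_two, coeff_zero] at h2
  cases z <;> cases x <;> cases y <;> norm_num [quadCoeff] at h2

end BasisL

open BasisL

lemma actB_L (a : ℝ) (x y : BasisL) :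
    actB (L a) x y
      = Finsupp.single (shift a x, y) (lCoeff a x)
        + Finsupp.single (x, shift a y) (lCoeff a y) := by
  simp [actB, bb_L, tenL, tenR, pN]

lemma act_bL_single (a : ℝ) (p : BasisL × BasisL) (c : ℂ) (x y : BasisL) :
    act (bL a) (Finsupp.single p c) (x, y)
      = (if p = (shift (-a) x, y) then lCoeff a (shift (-a) x) * c else 0)
        + (if p = (x, shift (-a) y) then lCoeff a (shift (-a) y) * c else 0) := by
  obtain ⟨p₁, p₂⟩ := p
  rw [act, bL, Finsupp.sum_single_index (by simp), Finsupp.sum_single_index (by simp)]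
  simp only [actB_L, one_mul, Finsupp.smul_apply, Finsupp.add_apply, Finsupp.single_apply,
    Prod.mk.injEq, shift_eq_iff, smul_eq_mul, smul_add]
  rw [mul_ite, mul_ite, mul_zero]
  congr 1 <;> refine ite_congr rfl (fun h => ?_) (fun _ => rfl)
  · rw [h.1, mul_comm]
  · rw [h.2, mul_comm]

lemma act_add (z : LL) (u v : VV) : act z (u + v) = act z u + act z v := by
  simp only [act]
  rw [← Finsupp.sum_add]
  refine Finsupp.sum_congr fun c _ => ?_
  rw [Finsupp.sum_add_index'] <;> simp [mul_add, add_smul]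

lemma act_bL_apply (a : ℝ) (v : VV) (x y : BasisL) :
    act (bL a) v (x, y)
      = lCoeff a (shift (-a) x) * v (shift (-a) x, y)
        + lCoeff a (shift (-a) y) * v (x, shift (-a) y) := by
  induction v using Finsupp.induction_linear with
  | zero => simp [act]
  | add u v hu hv => rw [act_add, Finsupp.add_apply, hu, hv]; simp only [Finsupp.add_apply]; ring
  | single p c =>
    rw [act_bL_single]
    simp only [Finsupp.single_apply, eq_comm (a := p), mul_ite, mul_zero]

lemma act_bL_smul (a : ℝ) (c : ℂ) (v : VV) : act (bL a) (c • v) = c • act (bL a) v := by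
  ext ⟨x, y⟩
  simp only [act_bL_apply, Finsupp.smul_apply, smul_eq_mul]
  ring

lemma act_bL_act_bL_neg_apply (a : ℝ) (u : VV) (x y : BasisL) :
    act (bL a) (act (bL (-a)) u) (x, y)
      = (((eigenPoly x).eval a + (eigenPoly y).eval a : ℝ) : ℂ) * u (x, y)
        + lCoeff a (shift (-a) x) * lCoeff (-a) (shift a y) * u (shift (-a) x, shift a y)
        + lCoeff a (shift (-a) y) * lCoeff (-a) (shift a x) * u (shift a x, shift (-a) y) := by
  simp only [act_bL_apply, neg_neg, shift_shift, neg_add_cancel, shift_zero]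
  rw [Complex.ofReal_add, ← lCoeff_shift_neg_mul_lCoeff, ← lCoeff_shift_neg_mul_lCoeff]
  ring

lemma eventually_cofinite_apply_shift_eq_zero (u : VV) (x y : BasisL) :
    ∀ᶠ a in Filter.cofinite,
      u (shift (-a) x, shift a y) = 0 ∧ u (shift a x, shift (-a) y) = 0 := by
  have hu : ∀ᶠ p in Filter.cofinite, u p = 0 := Filter.eventually_cofinite.2 u.hasFiniteSupport
  have hinj₁ : Function.Injective fun a => (shift (-a) x, shift a y) :=
    fun a b h => shift_left_injective y (congrArg Prod.snd h)
  have hinj₂ : Function.Injective fun a => (shift a x, shift (-a) y) :=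
    fun a b h => shift_left_injective x (congrArg Prod.fst h)
  exact (hinj₁.tendsto_cofinite.eventually hu).and (hinj₂.tendsto_cofinite.eventually hu)

lemma br_bL_single (a : ℝ) (z : BasisL) : br (bL a) (Finsupp.single z 1) = bb (L a) z := by
  simp [br, bL]

lemma inL_single {Γ : AddSubgroup ℝ} {s : ℝ} {z : BasisL} (hz : good Γ s z) (c : ℂ) :
    inL Γ s (Finsupp.single z c) := fun _ ha => by
  rwa [Finset.mem_singleton.1 (Finsupp.support_single_subset ha)]

lemma isHomogP_single (z : BasisL) (c : ℂ) :
    IsHomogP (Finsupp.single z c) (pN z) := fun _ ha => by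
  rw [Finset.mem_singleton.1 (Finsupp.support_single_subset ha)]

lemma inL.map_eq_zero {Γ : AddSubgroup ℝ} {s : ℝ} {x : LL} (hx : inL Γ s x) {M : Type*}
    [AddCommGroup M] [Module ℂ M] {f : LL →ₗ[ℂ] M}
    (hf : ∀ z, good Γ s z → f (Finsupp.single z 1) = 0) : f x = 0 := by
  have hx' : x ∈ Finsupp.supported ℂ ℂ {z | good Γ s z} := (Finsupp.mem_supported _ _).2 hx
  rw [Finsupp.supported_eq_span_single] at hx'
  refine LinearMap.mem_ker.1 (Submodule.span_le.2 ?_ hx')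
  rintro _ ⟨z, hz, rfl⟩
  exact hf z hz

namespace IsDer

variable {Γ : AddSubgroup ℝ} {s : ℝ} {ι : ℕ} {d : LL →ₗ[ℂ] VV}

lemma lCoeff_smul_map_shift_single (hd : IsDer Γ s ι d) {a : ℝ} (ha : a ∈ Γ)
    (hda : d (bL a) = 0) {z : BasisL} (hz : good Γ s z) :
    lCoeff a z • d (Finsupp.single (shift a z) 1) = act (bL a) (d (Finsupp.single z 1)) := by
  have h := hd.2.2 0 (pN z) (bL a) (Finsupp.single z 1) (inL_single (z := L a) ha 1)
    (inL_single hz 1) (isHomogP_single _ _) (isHomogP_single _ _)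
  have hact0 : act (Finsupp.single z 1) 0 = 0 := by simp [act]
  rwa [hda, hact0, br_bL_single, bb_L, map_smul, smul_zero, sub_zero, mul_zero, pow_zero,
    one_smul] at h

lemma eigenPoly_eval_smul_map_single (hd : IsDer Γ s ι d) {a : ℝ} (ha : a ∈ Γ)
    (hda : d (bL a) = 0) (hdna : d (bL (-a)) = 0) {z : BasisL} (hz : good Γ s z) :
    (((eigenPoly z).eval a : ℝ) : ℂ) • d (Finsupp.single z 1)
      = act (bL a) (act (bL (-a)) (d (Finsupp.single z 1))) := by
  have hz' : good Γ s (shift (-a) z) := good_shift (Γ.neg_mem ha) hz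
  rw [← hd.lCoeff_smul_map_shift_single (Γ.neg_mem ha) hdna hz, act_bL_smul,
    ← hd.lCoeff_smul_map_shift_single ha hda hz', shift_shift, neg_add_cancel, shift_zero,
    smul_smul, mul_comm, lCoeff_shift_neg_mul_lCoeff]

lemma map_single_eq_zero (hd : IsDer Γ s ι d) {ε : ℝ} (hε : ε ∈ Γ) (hε0 : ε ≠ 0)
    (hL : ∀ k : ℤ, d (bL (ε * k)) = 0) {z : BasisL} (hz : good Γ s z) :
    d (Finsupp.single z 1) = 0 := by
  ext ⟨x, y⟩
  have hroot : ∀ᶠ a in Filter.cofinite, (eigenPoly z - eigenPoly x - eigenPoly y).eval a ≠ 0 :=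
    Filter.eventually_cofinite.2 <| by
      simpa using finite_setOfPred_isRoot (eigenPoly_sub_sub_ne_zero z x y)
  have hmul : Function.Injective fun k : ℤ => ε * k :=
    (mul_right_injective₀ hε0).comp Int.cast_injective
  obtain ⟨k, hk, hx, hy⟩ := (hmul.tendsto_cofinite.eventually <|
    hroot.and (eventually_cofinite_apply_shift_eq_zero (d (Finsupp.single z 1)) x y)).exists
  have hεk : ε * k ∈ Γ := by simpa [zsmul_eq_mul, mul_comm] using Γ.zsmul_mem hε k
  have h := congrArg (· (x, y)) (hd.eigenPoly_eval_smul_map_single hεk (hL k)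
    (by simpa using hL (-k)) hz)
  simp only [Finsupp.smul_apply, smul_eq_mul, act_bL_act_bL_neg_apply, hx, hy, mul_zero,
    add_zero] at h
  have hk' : (((eigenPoly z - eigenPoly x - eigenPoly y).eval (ε * k) : ℝ) : ℂ) ≠ 0 :=
    mod_cast hk
  refine (mul_eq_zero.1 ?_).resolve_left hk'
  simp only [eval_sub, Complex.ofReal_sub, Complex.ofReal_add] at h ⊢
  linear_combination h

end IsDer

theorem stmt12_general (Γ : AddSubgroup ℝ) (s : ℝ) (hs : s ∈ Γ)
    (ε : ℝ) (hε : ε ∈ Γ) (hεpos : 0 < ε)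
    (ι : ℕ) (d : LL →ₗ[ℂ] VV) (hd : IsDer Γ s ι d)
    (hL : ∀ k : ℤ, d (bL (ε * k)) = 0) :
    (∀ p ∈ Γ, d (bG p) = 0 ∧ d (bL p) = 0 ∧ d (bI p) = 0 ∧ d (bH p) = 0) ∧
    (∀ x : LL, inL Γ s x → d x = 0) := by
  have hd0 (z : BasisL) (hz : good Γ s z) : d (Finsupp.single z 1) = 0 :=
    hd.map_single_eq_zero hε hεpos.ne' hL hz
  refine ⟨fun p hp => ?_, fun x hx => hx.map_eq_zero hd0⟩
  have hps : p - s ∈ Γ := Γ.sub_mem hp hs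
  exact ⟨hd0 (G p) hps, hd0 (L p) hp, hd0 (I p) hp, hd0 (H p) hps⟩

/-- case s ∈ Γ: if a degree-0 derivation d₀ : 𝔏 → 𝔏⊗𝔏 kills
all L_{kε} (k ∈ ℤ), then it kills every G_p, and likewise every L_p, I_p,
H_p, hence d₀ = 0 on 𝔏. -/
theorem stmt12 (Γ : AddSubgroup ℝ) (hΓ : Γ ≠ ⊥) (s : ℝ) (hs : s ∈ Γ)
    (ε : ℝ) (hε : ε ∈ Γ) (hεpos : 0 < ε)
    (ι : ℕ) (d : LL →ₗ[ℂ] VV) (hd : IsDer Γ s ι d) (hdeg : HasDeg Γ s 0 d)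
    (hL : ∀ k : ℤ, d (bL (ε * k)) = 0) :
    (∀ p ∈ Γ, d (bG p) = 0 ∧ d (bL p) = 0 ∧ d (bI p) = 0 ∧ d (bH p) = 0) ∧
    (∀ x : LL, inL Γ s x → d x = 0) :=
  stmt12_general Γ s hs ε hε hεpos ι d hd hL
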